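/- arXiv:2412.20747 — 7 statements merged into one kernel-verified Lean document; each statement's English description precedes it below -/
import Mathlib

section
/- Let α, β ∈ ℝ with β ≤ α and α + β ≠ 0. Define A(α, β) = (αβ - 1 + √((α² + 1)(β² + 1)))/(α + β). Then β ≤ A(α, β) ≤ α. -/
noncomputable def A (α β : ℝ) : ℝ :=
  (α * β - 1 + Real.sqrt ((α ^ 2 + 1) * (β ^ 2 + 1))) / (α + β)

theorem A_between (α β : ℝ) (hle : β ≤ α) (hne : α + β ≠ 0) :
    β ≤ A α β ∧ A α β ≤ α := by
  rcases hne.lt_or_gt with hneg | hpos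
  · -- α + β < 0, so β² ≥ α²
    have hsq : α ^ 2 ≤ β ^ 2 := by nlinarith
    have hS1 : Real.sqrt ((α ^ 2 + 1) * (β ^ 2 + 1)) ≤ β ^ 2 + 1 := by
      have h := Real.sqrt_le_sqrt
        (show (α ^ 2 + 1) * (β ^ 2 + 1) ≤ (β ^ 2 + 1) ^ 2 by nlinarith)
      rwa [Real.sqrt_sq (by positivity)] at h
    have hS2 : α ^ 2 + 1 ≤ Real.sqrt ((α ^ 2 + 1) * (β ^ 2 + 1)) := by
      have h := Real.sqrt_le_sqrt
        (show (α ^ 2 + 1) ^ 2 ≤ (α ^ 2 + 1) * (β ^ 2 + 1) by nlinarith)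
      rwa [Real.sqrt_sq (by positivity)] at h
    constructor <;> rw [A]
    · rw [le_div_iff_of_neg hneg]; nlinarith
    · rw [div_le_iff_of_neg hneg]; nlinarith
  · -- α + β > 0, so α² ≥ β²
    have hsq : β ^ 2 ≤ α ^ 2 := by nlinarith
    have hS1 : Real.sqrt ((α ^ 2 + 1) * (β ^ 2 + 1)) ≤ α ^ 2 + 1 := by
      have h := Real.sqrt_le_sqrt
        (show (α ^ 2 + 1) * (β ^ 2 + 1) ≤ (α ^ 2 + 1) ^ 2 by nlinarith)
      rwa [Real.sqrt_sq (by positivity)] at h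
    have hS2 : β ^ 2 + 1 ≤ Real.sqrt ((α ^ 2 + 1) * (β ^ 2 + 1)) := by
      have h := Real.sqrt_le_sqrt
        (show (β ^ 2 + 1) ^ 2 ≤ (α ^ 2 + 1) * (β ^ 2 + 1) by nlinarith)
      rwa [Real.sqrt_sq (by positivity)] at h
    constructor <;> rw [A]
    · rw [le_div_iff₀ hpos]; nlinarith
    · rw [div_le_iff₀ hpos]; nlinarith
end

section
/- Let f : [a, b] → ℝ be continuous on [a, b] and specularly differentiable on (a, b). If the specular derivative f^♮(x) > 0 for all x ∈ (a, b), then f is strictly increasing on [a, b]. -/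
/-!
Since the numerator of `A α β` is nonnegative, `0 < f^♮(x)` forces `f'₊(x) + f'₋(x) > 0`.
The one-sided derivatives of any function can differ only at countably many points (a rational
slope separating them, together with rational bounds on the neighbourhoods where the slopes
stay on either side of it, determines the point). Off that countable set `f'₊ = f'₋ > 0`, and a
continuous function whose right derivative is nonnegative off a countable set is monotone, by
comparing it with the integral of the right derivative cut off at `0`, which vanishes almost
everywhere. Strictness follows because on an interval of constancy the right derivative would
vanish at a point outside the countable set.
-/

open Set

/-- `f` is specularly differentiable at `x`: both one-sided derivatives exist. -/
def SpecularDifferentiableAt (f : ℝ → ℝ) (x : ℝ) : Prop :=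
  DifferentiableWithinAt ℝ f (Ici x) x ∧ DifferentiableWithinAt ℝ f (Iic x) x

/-- The specular derivative of `f` at `x`, in terms of the right-hand derivative
`α = f'₊(x)` and the left-hand derivative `β = f'₋(x)`. -/
noncomputable def specDeriv (f : ℝ → ℝ) (x : ℝ) : ℝ :=
  let α := derivWithin f (Ici x) x
  let β := derivWithin f (Iic x) x
  if α + β = 0 then 0 else A α β

open Filter Topology MeasureTheory

lemma A_numerator_nonneg (α β : ℝ) :
    0 ≤ α * β - 1 + √((α ^ 2 + 1) * (β ^ 2 + 1)) := by
  have hsq : (α * β - 1) ^ 2 ≤ (α ^ 2 + 1) * (β ^ 2 + 1) := by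
    nlinarith [sq_nonneg (α + β)]
  have habs : |α * β - 1| ≤ √((α ^ 2 + 1) * (β ^ 2 + 1)) :=
    Real.abs_le_sqrt hsq
  linarith [neg_abs_le (α * β - 1)]

lemma add_pos_of_A_pos {α β : ℝ} (h : 0 < A α β) : 0 < α + β := by
  rcases div_pos_iff.1 h with ⟨-, hpos⟩ | ⟨hneg, -⟩
  · exact hpos
  · exact absurd hneg (A_numerator_nonneg α β).not_gt

lemma add_pos_of_specDeriv_pos {f : ℝ → ℝ} {x : ℝ} (h : 0 < specDeriv f x) :
    0 < derivWithin f (Ici x) x + derivWithin f (Iic x) x := by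
  dsimp only [specDeriv] at h
  split_ifs at h
  · exact absurd h (lt_irrefl 0)
  · exact add_pos_of_A_pos h

section OneSidedDerivatives

variable (f : ℝ → ℝ)

lemma not_lt_of_slope_separated {q u v x y : ℝ} (hux : u < x) (hyv : y < v)
    (hxR : ∀ t ∈ Ioo x v, q < slope f x t) (hyL : ∀ t ∈ Ioo u y, slope f y t < q) :
    ¬ x < y := fun hxy =>
  (hxR y ⟨hxy, hyv⟩).not_gt (slope_comm f x y ▸ hyL x ⟨hux, hxy⟩)

lemma subsingleton_setOf_slope_separated (q u v : ℝ) :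
    {x | x ∈ Ioo u v ∧ (∀ t ∈ Ioo u x, slope f x t < q) ∧
      ∀ t ∈ Ioo x v, q < slope f x t}.Subsingleton := by
  rintro x ⟨hx, hxL, hxR⟩ y ⟨hy, hyL, hyR⟩
  exact le_antisymm (not_lt.1 (not_lt_of_slope_separated f hy.1 hx.2 hyR hxL))
    (not_lt.1 (not_lt_of_slope_separated f hx.1 hy.2 hxR hyL))

lemma countable_setOf_derivWithin_Iic_lt_Ici :
    {x | SpecularDifferentiableAt f x ∧
      derivWithin f (Iic x) x < derivWithin f (Ici x) x}.Countable := by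
  refine Countable.mono ?_ (countable_iUnion fun q : ℚ => countable_iUnion fun u : ℚ =>
    countable_iUnion fun v : ℚ => (subsingleton_setOf_slope_separated f q u v).countable)
  rintro x ⟨⟨hR, hL⟩, hlt⟩
  obtain ⟨q, hβq, hqα⟩ := exists_rat_btwn hlt
  have hRlim : Tendsto (slope f x) (𝓝[>] x) (𝓝 (derivWithin f (Ici x) x)) := by
    simpa only [Ici_sdiff_left] using hasDerivWithinAt_iff_tendsto_slope.1 hR.hasDerivWithinAt
  have hLlim : Tendsto (slope f x) (𝓝[<] x) (𝓝 (derivWithin f (Iic x) x)) := by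
    simpa only [Iic_sdiff_right] using hasDerivWithinAt_iff_tendsto_slope.1 hL.hasDerivWithinAt
  obtain ⟨v₀, hv₀, hR_sub⟩ :=
    mem_nhdsGT_iff_exists_Ioo_subset.1 (hRlim.eventually (eventually_gt_nhds hqα))
  obtain ⟨u₀, hu₀, hL_sub⟩ :=
    mem_nhdsLT_iff_exists_Ioo_subset.1 (hLlim.eventually (eventually_lt_nhds hβq))
  obtain ⟨v, hxv, hvv₀⟩ := exists_rat_btwn (mem_Ioi.1 hv₀)
  obtain ⟨u, hu₀u, hux⟩ := exists_rat_btwn (mem_Iio.1 hu₀)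
  simp only [mem_iUnion]
  exact ⟨q, u, v, ⟨hux, hxv⟩, fun t ht => hL_sub ⟨hu₀u.trans ht.1, ht.2⟩,
    fun t ht => hR_sub ⟨ht.1, ht.2.trans hvv₀⟩⟩

lemma countable_setOf_derivWithin_Ici_ne_Iic :
    {x | SpecularDifferentiableAt f x ∧
      derivWithin f (Ici x) x ≠ derivWithin f (Iic x) x}.Countable := by
  refine ((countable_setOf_derivWithin_Iic_lt_Ici f).union
    (countable_setOf_derivWithin_Iic_lt_Ici (-f))).mono ?_
  rintro x ⟨hx, hne⟩
  rcases hne.lt_or_gt with hlt | hgt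
  · right
    refine ⟨⟨hx.1.neg, hx.2.neg⟩, ?_⟩
    simpa only [derivWithin.neg, neg_lt_neg_iff] using hlt
  · exact Or.inl ⟨hx, hgt⟩

end OneSidedDerivatives

section RightDerivative

variable {f f' : ℝ → ℝ} {a b : ℝ} {s : Set ℝ}

lemma monotoneOn_of_hasDerivWithinAt_Ioi_nonneg_off_countable (hs : s.Countable)
    (hcont : ContinuousOn f (Icc a b))
    (hderiv : ∀ x ∈ Ioo a b, HasDerivWithinAt f (f' x) (Ioi x) x)
    (hf' : ∀ x ∈ Ioo a b \ s, 0 ≤ f' x) :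
    MonotoneOn f (Icc a b) := by
  intro x hx y hy hxy
  have hsub : Ioo x y ⊆ Ioo a b := Ioo_subset_Ioo hx.1 hy.2
  set φ : ℝ → ℝ := s.indicator fun t => min (f' t) 0
  have hφ_ae : φ =ᵐ[volume] 0 := by
    filter_upwards [hs.ae_notMem volume] with t ht
    exact indicator_of_notMem ht _
  have hφ_le : ∀ t ∈ Ioo x y, φ t ≤ f' t := by
    intro t ht
    by_cases hts : t ∈ s
    · simp only [φ, indicator_of_mem hts, min_le_left]
    · simpa only [φ, indicator_of_notMem hts] using
        hf' t ⟨hsub ht, hts⟩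
  have hφ_int : IntegrableOn φ (Icc x y) :=
    integrableOn_zero.congr_fun_ae (ae_restrict_of_ae hφ_ae.symm)
  have hint_le := intervalIntegral.integral_le_sub_of_hasDeriv_right_of_le hxy
    (hcont.mono (Icc_subset_Icc hx.1 hy.2)) (fun t ht => hderiv t (hsub ht)) hφ_int hφ_le
  rw [intervalIntegral.integral_zero_ae (hφ_ae.mono fun t ht _ => ht)] at hint_le
  linarith

lemma strictMonoOn_of_hasDerivWithinAt_Ioi_pos_off_countable (hs : s.Countable)
    (hcont : ContinuousOn f (Icc a b))
    (hderiv : ∀ x ∈ Ioo a b, HasDerivWithinAt f (f' x) (Ioi x) x)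
    (hf' : ∀ x ∈ Ioo a b \ s, 0 < f' x) :
    StrictMonoOn f (Icc a b) := by
  have hmono := monotoneOn_of_hasDerivWithinAt_Ioi_nonneg_off_countable hs hcont hderiv
    fun x hx => (hf' x hx).le
  intro x hx y hy hxy
  refine (hmono hx hy hxy.le).lt_of_ne fun hfxy => ?_
  obtain ⟨c, hcs, hc⟩ := (hs.dense_compl ℝ).exists_mem_open isOpen_Ioo (nonempty_Ioo.2 hxy)
  have hIcc : Icc x y ⊆ Icc a b := Icc_subset_Icc hx.1 hy.2
  have hconst : ∀ t ∈ Icc x y, f t = f x := fun t ht =>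
    le_antisymm (hfxy ▸ hmono (hIcc ht) hy ht.2) (hmono hx (hIcc ht) ht.1)
  have hzero : HasDerivWithinAt f 0 (Ioi c) c := by
    refine (hasDerivWithinAt_const c _ (f x)).congr_of_eventuallyEq ?_
      (hconst c (Ioo_subset_Icc_self hc))
    filter_upwards [Ioo_mem_nhdsGT hc.2] with t ht
    exact hconst t ⟨(hc.1.trans ht.1).le, ht.2.le⟩
  have hc_ab : c ∈ Ioo a b := Ioo_subset_Ioo hx.1 hy.2 hc
  exact (hf' c ⟨hc_ab, hcs⟩).ne' ((uniqueDiffWithinAt_Ioi c).eq_deriv _ (hderiv c hc_ab) hzero)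

end RightDerivative

theorem strictMonoOn_of_specDeriv_pos_general (f : ℝ → ℝ) (a b : ℝ)
    (hcont : ContinuousOn f (Icc a b))
    (hdiff : ∀ x ∈ Ioo a b, SpecularDifferentiableAt f x)
    (hpos : ∀ x ∈ Ioo a b, 0 < specDeriv f x) :
    StrictMonoOn f (Icc a b) := by
  refine strictMonoOn_of_hasDerivWithinAt_Ioi_pos_off_countable
    (countable_setOf_derivWithin_Ici_ne_Iic f) hcont
    (fun x hx => (hdiff x hx).1.hasDerivWithinAt.mono Ioi_subset_Ici_self) ?_
  rintro x ⟨hx, hxs⟩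
  have heq : derivWithin f (Ici x) x = derivWithin f (Iic x) x :=
    not_not.1 fun hne => hxs ⟨hdiff x hx, hne⟩
  linarith [add_pos_of_specDeriv_pos (hpos x hx)]

theorem strictMonoOn_of_specDeriv_pos (f : ℝ → ℝ) (a b : ℝ) (hab : a < b)
    (hcont : ContinuousOn f (Icc a b))
    (hdiff : ∀ x ∈ Ioo a b, SpecularDifferentiableAt f x)
    (hpos : ∀ x ∈ Ioo a b, 0 < specDeriv f x) :
    StrictMonoOn f (Icc a b) :=
  strictMonoOn_of_specDeriv_pos_general f a b hcont hdiff hpos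
end

section
/- Let f : [a, b] → ℝ be continuous on [a, b] and specularly differentiable on (a, b). If f^♮(x) = 0 for all x ∈ (a, b), then f is constant on [a, b]. -/
open Set

open Filter Topology

/- The identity `(α² + 1)(β² + 1) = (αβ - 1)² + (α + β)²` makes the numerator of `A α β`
positive as soon as `α + β ≠ 0`. -/
theorem A_ne_zero {α β : ℝ} (h : α + β ≠ 0) : A α β ≠ 0 := by
  have hsq : (α ^ 2 + 1) * (β ^ 2 + 1) = (α * β - 1) ^ 2 + (α + β) ^ 2 := by ring
  have hlt : |1 - α * β| < Real.sqrt ((α ^ 2 + 1) * (β ^ 2 + 1)) := by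
    rw [Real.lt_sqrt (abs_nonneg _), sq_abs, hsq]
    nlinarith [pow_pos (abs_pos.2 h) 2, sq_abs (α + β)]
  refine div_ne_zero (ne_of_gt ?_) h
  linarith [le_abs_self (1 - α * β)]

theorem specDeriv_eq_zero_iff {f : ℝ → ℝ} {x : ℝ} :
    specDeriv f x = 0 ↔ derivWithin f (Ici x) x + derivWithin f (Iic x) x = 0 := by
  dsimp only [specDeriv]
  split_ifs with h
  · exact iff_of_true rfl h
  · exact iff_of_false (A_ne_zero h) h

theorem HasDerivWithinAt.nonneg_of_frequently_right_le {g : ℝ → ℝ} {g' c : ℝ}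
    (hg : HasDerivWithinAt g g' (Ici c) c) (h : ∃ᶠ t in 𝓝[>] c, g c ≤ g t) : 0 ≤ g' := by
  have hslope : Tendsto (slope g c) (𝓝[>] c) (𝓝 g') :=
    (hasDerivWithinAt_iff_tendsto_slope' (s := Ioi c) (lt_irrefl c)).1 hg.Ioi_of_Ici
  refine ge_of_tendsto_of_frequently hslope ?_
  refine (h.and_eventually self_mem_nhdsWithin).mono fun t ⟨hle, hct⟩ => ?_
  rw [slope_def_field]
  exact div_nonneg (sub_nonneg.2 hle) (sub_nonneg.2 (le_of_lt hct))

theorem HasDerivWithinAt.nonneg_of_eventually_left_le {g : ℝ → ℝ} {g' c : ℝ}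
    (hg : HasDerivWithinAt g g' (Iic c) c) (h : ∀ᶠ t in 𝓝[<] c, g t ≤ g c) : 0 ≤ g' := by
  have hslope : Tendsto (slope g c) (𝓝[<] c) (𝓝 g') :=
    (hasDerivWithinAt_iff_tendsto_slope' (s := Iio c) (lt_irrefl c)).1 hg.Iio_of_Iic
  refine ge_of_tendsto hslope ?_
  filter_upwards [h, self_mem_nhdsWithin] with t hle htc
  rw [slope_def_field]
  exact div_nonneg_of_nonpos (sub_nonpos.2 hle) (sub_nonpos.2 (le_of_lt htc))

/- Take `c` to be the infimum of the points of `[x, y]` where `g` exceeds `δ`. -/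
theorem ContinuousOn.exists_upcrossing {g : ℝ → ℝ} {x y δ : ℝ} (hg : ContinuousOn g (Icc x y))
    (hxy : x ≤ y) (hx : g x < δ) (hy : δ < g y) :
    ∃ c ∈ Ioo x y, g c = δ ∧ (∀ᶠ t in 𝓝[<] c, g t ≤ δ) ∧ ∃ᶠ t in 𝓝[>] c, δ < g t := by
  set S := {t ∈ Icc x y | δ < g t}
  set c := sInf S
  have hyS : y ∈ S := ⟨right_mem_Icc.2 hxy, hy⟩
  have hS_bdd : BddBelow S := ⟨x, fun t ht => ht.1.1⟩
  have hxc : x ≤ c := le_csInf ⟨y, hyS⟩ fun t ht => ht.1.1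
  have hcy : c ≤ y := csInf_le hS_bdd hyS
  have hbelow : ∀ t ∈ Ico x c, g t ≤ δ := fun t ht =>
    not_lt.1 fun hlt => (csInf_le hS_bdd ⟨⟨ht.1, ht.2.le.trans hcy⟩, hlt⟩).not_gt ht.2
  have hδ_le : δ ≤ g c := by
    have hclosed := hg.preimage_isClosed_of_isClosed isClosed_Icc (isClosed_Ici (a := δ))
    have hsub : S ⊆ Icc x y ∩ g ⁻¹' Ici δ := fun t ht => ⟨ht.1, ht.2.le⟩
    exact (closure_minimal hsub hclosed (csInf_mem_closure ⟨y, hyS⟩ hS_bdd)).2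
  have hxc' : x < c := lt_of_le_of_ne hxc fun h => (h ▸ hx).not_ge hδ_le
  have hle_δ : g c ≤ δ := by
    have hclosed := hg.preimage_isClosed_of_isClosed isClosed_Icc (isClosed_Iic (a := δ))
    have hc : c ∈ closure (Ico x c) := by
      rw [closure_Ico hxc'.ne]
      exact right_mem_Icc.2 hxc
    have hsub : Ico x c ⊆ Icc x y ∩ g ⁻¹' Iic δ := fun t ht =>
      ⟨⟨ht.1, ht.2.le.trans hcy⟩, hbelow t ht⟩
    exact (closure_minimal hsub hclosed hc).2
  have hgc : g c = δ := le_antisymm hle_δ hδ_le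
  have hcy' : c < y := lt_of_le_of_ne hcy fun h => (h ▸ hy).ne' hgc
  refine ⟨c, ⟨hxc', hcy'⟩, hgc, ?_, ?_⟩
  · filter_upwards [Ico_mem_nhdsLT hxc'] using hbelow
  · rw [frequently_iff]
    intro U hU
    obtain ⟨u, hcu, hsub⟩ := mem_nhdsGT_iff_exists_Ioo_subset.1 hU
    obtain ⟨t, htS, htu⟩ := exists_lt_of_csInf_lt ⟨y, hyS⟩ hcu
    have hct : c < t := lt_of_le_of_ne (csInf_le hS_bdd htS) fun h => (h ▸ htS.2).ne' hgc
    exact ⟨t, hsub ⟨hct, htu⟩, htS.2⟩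

/- If `f x < f y`, tilt `f` by a small slope `ε` so that it still increases from `x` to `y`;
at an upcrossing point both one-sided derivatives of `f` are then at least `ε`. -/
theorem antitoneOn_of_derivWithin_Ici_add_derivWithin_Iic_nonpos {f : ℝ → ℝ} {a b : ℝ}
    (hf : ContinuousOn f (Icc a b)) (hdiff : ∀ x ∈ Ioo a b, SpecularDifferentiableAt f x)
    (hsum : ∀ x ∈ Ioo a b, derivWithin f (Ici x) x + derivWithin f (Iic x) x ≤ 0) :
    AntitoneOn f (Icc a b) := by
  intro x hx y hy hxy
  by_contra! hlt
  obtain ⟨ε, hε, hεlt⟩ := exists_pos_mul_lt (sub_pos.2 hlt) (y - x)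
  set g : ℝ → ℝ := fun t => f t - ε * t
  have hg : ContinuousOn g (Icc x y) :=
    (hf.mono (Icc_subset_Icc hx.1 hy.2)).sub (continuousOn_const.mul continuousOn_id)
  obtain ⟨c, hc, hgc, hleft, hright⟩ :=
    hg.exists_upcrossing (δ := (g x + g y) / 2) hxy (by simp only [g]; linarith)
      (by simp only [g]; linarith)
  have hcab : c ∈ Ioo a b := ⟨hx.1.trans_lt hc.1, hc.2.trans_le hy.2⟩
  obtain ⟨hdr, hdl⟩ := hdiff c hcab
  have hgr : HasDerivWithinAt g (derivWithin f (Ici c) c - ε) (Ici c) c :=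
    (hdr.hasDerivWithinAt.sub ((hasDerivWithinAt_id c _).const_mul ε)).congr_deriv (by ring)
  have hgl : HasDerivWithinAt g (derivWithin f (Iic c) c - ε) (Iic c) c :=
    (hdl.hasDerivWithinAt.sub ((hasDerivWithinAt_id c _).const_mul ε)).congr_deriv (by ring)
  have hr := hgr.nonneg_of_frequently_right_le (hright.mono fun t ht => hgc ▸ ht.le)
  have hl := hgl.nonneg_of_eventually_left_le (hleft.mono fun t ht => hgc ▸ ht)
  linarith [hsum c hcab]

theorem monotoneOn_of_derivWithin_Ici_add_derivWithin_Iic_nonneg {f : ℝ → ℝ} {a b : ℝ}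
    (hf : ContinuousOn f (Icc a b)) (hdiff : ∀ x ∈ Ioo a b, SpecularDifferentiableAt f x)
    (hsum : ∀ x ∈ Ioo a b, 0 ≤ derivWithin f (Ici x) x + derivWithin f (Iic x) x) :
    MonotoneOn f (Icc a b) := by
  have hanti : AntitoneOn (-f) (Icc a b) :=
    antitoneOn_of_derivWithin_Ici_add_derivWithin_Iic_nonpos hf.neg
      (fun x hx => ⟨(hdiff x hx).1.neg, (hdiff x hx).2.neg⟩)
      (fun x hx => by rw [derivWithin.neg, derivWithin.neg]; linarith [hsum x hx])
  exact fun x hx y hy hxy => neg_le_neg_iff.1 (hanti hx hy hxy)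

theorem constant_of_specDeriv_zero_general (f : ℝ → ℝ) (a b : ℝ)
    (hcont : ContinuousOn f (Icc a b))
    (hdiff : ∀ x ∈ Ioo a b, SpecularDifferentiableAt f x)
    (hzero : ∀ x ∈ Ioo a b, specDeriv f x = 0) :
    ∀ x ∈ Icc a b, ∀ y ∈ Icc a b, f x = f y := by
  have hsum (x : ℝ) (hx : x ∈ Ioo a b) :
      derivWithin f (Ici x) x + derivWithin f (Iic x) x = 0 :=
    specDeriv_eq_zero_iff.1 (hzero x hx)
  have hanti := antitoneOn_of_derivWithin_Ici_add_derivWithin_Iic_nonpos hcont hdiff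
    fun x hx => (hsum x hx).le
  have hmono := monotoneOn_of_derivWithin_Ici_add_derivWithin_Iic_nonneg hcont hdiff
    fun x hx => (hsum x hx).ge
  intro x hx y hy
  rcases le_total x y with hxy | hyx
  · exact le_antisymm (hmono hx hy hxy) (hanti hx hy hxy)
  · exact le_antisymm (hanti hy hx hyx) (hmono hy hx hyx)

theorem constant_of_specDeriv_zero (f : ℝ → ℝ) (a b : ℝ) (hab : a < b)
    (hcont : ContinuousOn f (Icc a b))
    (hdiff : ∀ x ∈ Ioo a b, SpecularDifferentiableAt f x)
    (hzero : ∀ x ∈ Ioo a b, specDeriv f x = 0) :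
    ∀ x ∈ Icc a b, ∀ y ∈ Icc a b, f x = f y :=
  constant_of_specDeriv_zero_general f a b hcont hdiff hzero
end

section
/- Let f : [a, b] → ℝ be continuous on [a, b] and specularly differentiable on (a, b). Then f^♮(x) ≥ 0 for all x ∈ (a, b) if and only if f is monotonically increasing on [a, b]. -/
open Set

/-!
A point where the specular derivative is nonnegative but the right derivative is negative
has a positive left derivative, so it is a strict local maximum; strict local maxima form a
countable set. Hence the right derivative is nonnegative off a countable set, and a continuous
function with this property is monotone: if `g = f + ε x` dropped from `g x` to `g w`, take a
level `v` in between that is not a value of `g` at an exceptional point, and the last point `c`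
where `g = v`; there `g` has a positive right derivative, yet `g < v` just to the right of `c`.
-/

open Filter Topology

theorem A_nonneg_iff {α β : ℝ} (h : α + β ≠ 0) : 0 ≤ A α β ↔ 0 ≤ α + β := by
  have hnum : 0 < α * β - 1 + Real.sqrt ((α ^ 2 + 1) * (β ^ 2 + 1)) := by
    -- `(α ^ 2 + 1) * (β ^ 2 + 1) = (1 - α * β) ^ 2 + (α + β) ^ 2`
    have : 1 - α * β < Real.sqrt ((α ^ 2 + 1) * (β ^ 2 + 1)) :=
      Real.lt_sqrt_of_sq_lt (by nlinarith [pow_two_pos_of_ne_zero h])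
    linarith
  rw [A, (div_ne_zero hnum.ne' h).symm.le_iff_lt, div_pos_iff_of_pos_left hnum,
    (Ne.symm h).le_iff_lt]

theorem specDeriv_nonneg_iff (f : ℝ → ℝ) (x : ℝ) :
    0 ≤ specDeriv f x ↔ 0 ≤ derivWithin f (Ici x) x + derivWithin f (Iic x) x := by
  by_cases h : derivWithin f (Ici x) x + derivWithin f (Iic x) x = 0
  · simp [specDeriv, h]
  · simp only [specDeriv, if_neg h]
    exact A_nonneg_iff h

theorem MonotoneOn.derivWithin_nonneg_of_mem_nhds {𝕜 : Type*} [NontriviallyNormedField 𝕜]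
    [LinearOrder 𝕜] [IsStrictOrderedRing 𝕜] [OrderTopology 𝕜] {f : 𝕜 → 𝕜} {s t : Set 𝕜} {x : 𝕜}
    (hf : MonotoneOn f s) (hs : s ∈ 𝓝 x) : 0 ≤ derivWithin f t x := by
  rw [← derivWithin_inter hs]
  exact (hf.mono inter_subset_right).derivWithin_nonneg

def IsStrictLocalMax {X β : Type*} [TopologicalSpace X] [Preorder β] (f : X → β) (x : X) :
    Prop :=
  ∀ᶠ y in 𝓝[≠] x, f y < f x

theorem countable_setOf_isStrictLocalMax {X β : Type*} [TopologicalSpace X]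
    [SecondCountableTopology X] [Preorder β] (f : X → β) :
    {x | IsStrictLocalMax f x}.Countable := by
  -- a basic open set contains at most one point at which `f` exceeds its other values there
  obtain ⟨B, hBc, -, hB⟩ := TopologicalSpace.exists_countable_basis X
  refine Countable.mono (s₂ := ⋃ U ∈ B, {x ∈ U | ∀ y ∈ U, y ≠ x → f y < f x}) ?_
    (hBc.biUnion fun U _ => ?_)
  · intro x hx
    obtain ⟨U, hUB, hxU, hU⟩ := hB.mem_nhds_iff.1 (eventually_nhdsWithin_iff.1 hx)
    exact mem_biUnion hUB ⟨hxU, fun y hy hne => hU hy hne⟩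
  · refine Subsingleton.countable ?_
    rintro x ⟨hxU, hx⟩ y ⟨hyU, hy⟩
    by_contra hne
    exact (hx y hyU (Ne.symm hne)).not_gt (hy x hxU hne)

section OneSided

variable {𝕜 : Type*} [NontriviallyNormedField 𝕜] [LinearOrder 𝕜] [IsStrictOrderedRing 𝕜]
  [OrderTopology 𝕜] {f : 𝕜 → 𝕜} {f' x : 𝕜}

theorem HasDerivWithinAt.eventually_nhdsGT_lt (hf : HasDerivWithinAt f f' (Ici x) x)
    (hf' : 0 < f') : ∀ᶠ y in 𝓝[>] x, f x < f y := by
  have hslope := (hasDerivWithinAt_iff_tendsto_slope' self_notMem_Ioi).1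
    (hasDerivWithinAt_Ioi_iff_Ici.2 hf)
  filter_upwards [hslope.eventually_const_lt hf', self_mem_nhdsWithin] with y hy hxy
  exact (slope_pos_iff hxy).1 hy

theorem HasDerivWithinAt.eventually_nhdsGT_gt (hf : HasDerivWithinAt f f' (Ici x) x)
    (hf' : f' < 0) : ∀ᶠ y in 𝓝[>] x, f y < f x := by
  simpa using hf.neg.eventually_nhdsGT_lt (neg_pos.2 hf')

theorem HasDerivWithinAt.eventually_nhdsLT_lt (hf : HasDerivWithinAt f f' (Iic x) x)
    (hf' : 0 < f') : ∀ᶠ y in 𝓝[<] x, f y < f x := by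
  have hslope := (hasDerivWithinAt_iff_tendsto_slope' self_notMem_Iio).1
    (hasDerivWithinAt_Iio_iff_Iic.2 hf)
  filter_upwards [hslope.eventually_const_lt hf', self_mem_nhdsWithin] with y hy hyx
  exact (slope_pos_iff_gt hyx).1 hy

theorem isStrictLocalMax_of_hasDerivWithinAt {r l : 𝕜} (hr : HasDerivWithinAt f r (Ici x) x)
    (hl : HasDerivWithinAt f l (Iic x) x) (hr0 : r < 0) (hl0 : 0 < l) : IsStrictLocalMax f x := by
  rw [IsStrictLocalMax, ← nhdsLT_sup_nhdsGT, eventually_sup]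
  exact ⟨hl.eventually_nhdsLT_lt hl0, hr.eventually_nhdsGT_gt hr0⟩

end OneSided

theorem exists_last_eq_of_continuousOn {g : ℝ → ℝ} {x w v : ℝ} (hxw : x ≤ w)
    (hg : ContinuousOn g (Icc x w)) (hxv : v ≤ g x) (hwv : g w < v) :
    ∃ c ∈ Ico x w, g c = v ∧ ∀ t ∈ Ioc c w, g t < v := by
  have hS : IsCompact (Icc x w ∩ g ⁻¹' Ici v) :=
    isCompact_Icc.of_isClosed_subset (hg.preimage_isClosed_of_isClosed isClosed_Icc isClosed_Ici)
      inter_subset_left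
  obtain ⟨c, ⟨hc, hcv⟩, hmax⟩ := hS.exists_isGreatest ⟨x, left_mem_Icc.2 hxw, hxv⟩
  have hlast : ∀ t ∈ Ioc c w, g t < v := fun t ht =>
    not_le.1 fun hvt => (hmax ⟨⟨hc.1.trans ht.1.le, ht.2⟩, hvt⟩).not_gt ht.1
  obtain ⟨t, ht, hgt⟩ :=
    intermediate_value_Icc' hc.2 (hg.mono (Icc_subset_Icc_left hc.1)) ⟨hwv.le, hcv⟩
  obtain rfl : c = t := ht.1.eq_or_lt.resolve_right fun hct => (hlast t ⟨hct, ht.2⟩).ne hgt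
  refine ⟨c, ⟨hc.1, hc.2.lt_of_ne ?_⟩, hgt, hlast⟩
  rintro rfl
  exact hwv.not_ge hcv

section Monotone

variable {f f' : ℝ → ℝ} {a b : ℝ} {E : Set ℝ}

theorem monotoneOn_of_hasDerivWithinAt_Ici_pos_of_countable (hE : E.Countable)
    (hf : ContinuousOn f (Icc a b))
    (hf' : ∀ x ∈ Ioo a b \ E, HasDerivWithinAt f (f' x) (Ici x) x)
    (hpos : ∀ x ∈ Ioo a b \ E, 0 < f' x) : MonotoneOn f (Icc a b) := by
  intro x hx w hw hxw
  by_contra! hwx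
  obtain ⟨v, hvE, hv⟩ : ∃ v ∈ (f '' E)ᶜ, v ∈ Ioo (f w) (f x) :=
    ((hE.image f).dense_compl ℝ).exists_between hwx
  obtain ⟨c, hc, hfc, hlast⟩ :=
    exists_last_eq_of_continuousOn hxw (hf.mono (Icc_subset_Icc hx.1 hw.2)) hv.2.le hv.1
  have hxc : x < c := hc.1.lt_of_ne fun hxc => hv.2.ne' (hxc ▸ hfc)
  have hcE : c ∈ Ioo a b \ E :=
    ⟨⟨hx.1.trans_lt hxc, hc.2.trans_le hw.2⟩, fun hcE => hvE ⟨c, hcE, hfc⟩⟩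
  obtain ⟨t, hct, ht⟩ :=
    (((hf' c hcE).eventually_nhdsGT_lt (hpos c hcE)).and (Ioc_mem_nhdsGT hc.2)).exists
  exact (hlast t ht).not_gt (hfc ▸ hct)

theorem monotoneOn_of_hasDerivWithinAt_Ici_nonneg_of_countable (hE : E.Countable)
    (hf : ContinuousOn f (Icc a b))
    (hf' : ∀ x ∈ Ioo a b \ E, HasDerivWithinAt f (f' x) (Ici x) x)
    (hnonneg : ∀ x ∈ Ioo a b \ E, 0 ≤ f' x) : MonotoneOn f (Icc a b) := by
  intro x hx y hy hxy
  have hperturbed : ∀ ε > 0, f x + ε * x ≤ f y + ε * y := fun ε hε =>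
    monotoneOn_of_hasDerivWithinAt_Ici_pos_of_countable hE
      (hf.add (continuousOn_const.mul continuousOn_id))
      (fun z hz => (hf' z hz).add ((hasDerivWithinAt_id z _).const_mul ε))
      (fun z hz => by linarith [hnonneg z hz]) hx hy hxy
  have hlim (z : ℝ) : Tendsto (fun ε => f z + ε * z) (𝓝[>] 0) (𝓝 (f z)) :=
    ((show Continuous fun ε : ℝ => f z + ε * z by fun_prop).tendsto' 0 (f z)
      (by simp)).mono_left nhdsWithin_le_nhds
  exact le_of_tendsto_of_tendsto (hlim x) (hlim y)
    (eventually_nhdsWithin_of_forall fun ε hε => hperturbed ε hε)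

end Monotone

theorem specDeriv_nonneg_iff_monotoneOn_general (f : ℝ → ℝ) (a b : ℝ)
    (hcont : ContinuousOn f (Icc a b))
    (hdiff : ∀ x ∈ Ioo a b, SpecularDifferentiableAt f x) :
    (∀ x ∈ Ioo a b, 0 ≤ specDeriv f x) ↔ MonotoneOn f (Icc a b) := by
  constructor
  · intro hspec
    refine monotoneOn_of_hasDerivWithinAt_Ici_nonneg_of_countable
      (countable_setOf_isStrictLocalMax f) hcont
      (fun x hx => (hdiff x hx.1).1.hasDerivWithinAt) fun x ⟨hx, hmax⟩ => ?_
    by_contra! hright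
    have hsum := (specDeriv_nonneg_iff f x).1 (hspec x hx)
    exact hmax (isStrictLocalMax_of_hasDerivWithinAt (hdiff x hx).1.hasDerivWithinAt
      (hdiff x hx).2.hasDerivWithinAt hright (by linarith))
  · intro hmono x hx
    have hnhds : Icc a b ∈ 𝓝 x := Icc_mem_nhds hx.1 hx.2
    exact (specDeriv_nonneg_iff f x).2
      (add_nonneg (hmono.derivWithin_nonneg_of_mem_nhds hnhds)
        (hmono.derivWithin_nonneg_of_mem_nhds hnhds))

theorem specDeriv_nonneg_iff_monotoneOn (f : ℝ → ℝ) (a b : ℝ) (hab : a < b)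
    (hcont : ContinuousOn f (Icc a b))
    (hdiff : ∀ x ∈ Ioo a b, SpecularDifferentiableAt f x) :
    (∀ x ∈ Ioo a b, 0 ≤ specDeriv f x) ↔ MonotoneOn f (Icc a b) :=
  specDeriv_nonneg_iff_monotoneOn_general f a b hcont hdiff
end

section
/- Let f : (a, b) → ℝ be continuous. Then f is convex on (a, b) if and only if the specular derivative f^♮ exists at every point of (a, b) and is monotonically increasing on (a, b). -/
/-!
`⇒`: a convex function has one-sided derivatives with `f'₋ ≤ f'₊`, and secant slopes separate
them: `f'₊(x) ≤ slope f x y ≤ f'₋(y)` for `x < y`. The specular derivative `A(f'₊, f'₋)` lies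
between the two one-sided derivatives, so it is squeezed into the same chain.

`⇐`: it suffices that `f♮(x) ≤ slope f x y ≤ f♮(y)`, since then slopes of adjacent secants
increase. For `c < f♮(x)`, monotonicity gives `max f'₊ f'₋ > c` on `(x, y)`, so `g = f - c·id`
has a positive one-sided derivative at every point. Such a `g` cannot decrease: if `g v < g u`,
take a level `λ` between them that is not the value of `g` at a strict local maximum (there are
only countably many), and let `s` be the last point with `g s ≥ λ`. Then `g s = λ`, the right
derivative at `s` is not positive, hence the left one is, and `s` is a strict local maximum
with value `λ`.
-/

open Set

open Filter Topology

lemma A_comm (α β : ℝ) : A α β = A β α := by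
  rw [A, A, mul_comm β α, mul_comm (β ^ 2 + 1), add_comm β α]

lemma A_mem_Icc {α β : ℝ} (h : β ≤ α) (hs : α + β ≠ 0) : A α β ∈ Icc β α := by
  rw [A, mem_Icc]
  -- `r` is the geometric mean of `α ^ 2 + 1` and `β ^ 2 + 1`, so it lies between them.
  set r := √((α ^ 2 + 1) * (β ^ 2 + 1))
  have hr : r ^ 2 = (α ^ 2 + 1) * (β ^ 2 + 1) := Real.sq_sqrt (by positivity)
  have hr0 : 0 ≤ r := Real.sqrt_nonneg _
  rcases hs.lt_or_gt with hneg | hpos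
  · have hsq : α ^ 2 ≤ β ^ 2 := by nlinarith
    have h1 : α ^ 2 + 1 ≤ r := by nlinarith
    have h2 : r ≤ β ^ 2 + 1 := by nlinarith
    rw [le_div_iff_of_neg hneg, div_le_iff_of_neg hneg]
    constructor <;> linarith
  · have hsq : β ^ 2 ≤ α ^ 2 := by nlinarith
    have h1 : β ^ 2 + 1 ≤ r := by nlinarith
    have h2 : r ≤ α ^ 2 + 1 := by nlinarith
    rw [le_div_iff₀ hpos, div_le_iff₀ hpos]
    constructor <;> linarith

lemma specDeriv_mem_Icc (f : ℝ → ℝ) (x : ℝ) :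
    specDeriv f x ∈ Icc (min (derivWithin f (Ici x) x) (derivWithin f (Iic x) x))
      (max (derivWithin f (Ici x) x) (derivWithin f (Iic x) x)) := by
  set α := derivWithin f (Ici x) x
  set β := derivWithin f (Iic x) x
  simp only [specDeriv]
  split_ifs with hs
  · constructor <;> linarith [min_le_left α β, min_le_right α β, le_max_left α β, le_max_right α β]
  · rcases le_total β α with h | h
    · rw [min_eq_right h, max_eq_left h]
      exact A_mem_Icc h hs
    · rw [min_eq_left h, max_eq_right h, A_comm]
      exact A_mem_Icc h (by rwa [add_comm])

lemma SpecularDifferentiableAt.continuousAt {f : ℝ → ℝ} {x : ℝ}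
    (hf : SpecularDifferentiableAt f x) : ContinuousAt f x :=
  continuousAt_iff_continuous_left_right.2 ⟨hf.2.continuousWithinAt, hf.1.continuousWithinAt⟩

namespace ConvexOn

variable {S : Set ℝ} {f : ℝ → ℝ} {x y : ℝ}

lemma specularDifferentiableAt_of_mem_interior (hfc : ConvexOn ℝ S f) (hx : x ∈ interior S) :
    SpecularDifferentiableAt f x :=
  ⟨(hfc.hasDerivWithinAt_sInf_slope_of_mem_interior hx).Ici_of_Ioi.differentiableWithinAt,
    (hfc.hasDerivWithinAt_sSup_slope_of_mem_interior hx).Iic_of_Iio.differentiableWithinAt⟩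

lemma derivWithin_Iic_le_derivWithin_Ici (hfc : ConvexOn ℝ S f) (hx : x ∈ interior S) :
    derivWithin f (Iic x) x ≤ derivWithin f (Ici x) x := by
  have hleft := (hfc.specularDifferentiableAt_of_mem_interior hx).2.hasDerivWithinAt.Iio_of_Iic
  rw [← derivWithin_Ioi_eq_Ici, ← hleft.derivWithin (uniqueDiffWithinAt_Iio x)]
  exact hfc.leftDeriv_le_rightDeriv_of_mem_interior hx

lemma monotoneOn_specDeriv (hfc : ConvexOn ℝ S f) : MonotoneOn (specDeriv f) (interior S) := by
  intro x hx y hy hxy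
  rcases hxy.eq_or_lt with rfl | hlt
  · rfl
  have hdx := hfc.specularDifferentiableAt_of_mem_interior hx
  have hdy := hfc.specularDifferentiableAt_of_mem_interior hy
  calc specDeriv f x ≤ derivWithin f (Ici x) x :=
        (specDeriv_mem_Icc f x).2.trans (max_eq_left (hfc.derivWithin_Iic_le_derivWithin_Ici hx)).le
    _ ≤ slope f x y := hfc.le_slope_of_hasDerivWithinAt_Ioi (interior_subset hx)
        (interior_subset hy) hlt hdx.1.hasDerivWithinAt.Ioi_of_Ici
    _ ≤ derivWithin f (Iic y) y := hfc.slope_le_of_hasDerivWithinAt_Iio (interior_subset hx)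
        (interior_subset hy) hlt hdy.2.hasDerivWithinAt.Iio_of_Iic
    _ ≤ specDeriv f y := (min_eq_right (hfc.derivWithin_Iic_le_derivWithin_Ici hy)).ge.trans
        (specDeriv_mem_Icc f y).1

end ConvexOn

lemma countable_setOf_strictLocalMax (F : ℝ → ℝ) :
    {x | ∀ᶠ y in 𝓝[≠] x, F y < F x}.Countable := by
  let T : ℚ × ℚ → Set ℝ := fun p =>
    {x | x ∈ Ioo (p.1 : ℝ) p.2 ∧ ∀ y ∈ Ioo (p.1 : ℝ) p.2, y ≠ x → F y < F x}
  have hT : ∀ p, (T p).Subsingleton := fun p x hx y hy => by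
    by_contra hne
    exact (hx.2 y hy.1 (Ne.symm hne)).asymm (hy.2 x hx.1 hne)
  refine (countable_iUnion fun p => (hT p).countable).mono fun x hx => mem_iUnion.2 ?_
  obtain ⟨l, u, hlu, hsub⟩ := mem_nhds_iff_exists_Ioo_subset.1 (eventually_nhdsWithin_iff.1 hx)
  obtain ⟨q, hlq, hqx⟩ := exists_rat_btwn hlu.1
  obtain ⟨q', hxq', hq'u⟩ := exists_rat_btwn hlu.2
  exact ⟨(q, q'), ⟨hqx, hxq'⟩, fun y hy hyx => hsub ⟨hlq.trans hy.1, hy.2.trans hq'u⟩ hyx⟩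

lemma HasDerivWithinAt.eventually_lt_of_Ici_pos {F : ℝ → ℝ} {d x : ℝ}
    (hF : HasDerivWithinAt F d (Ici x) x) (hd : 0 < d) : ∀ᶠ t in 𝓝[>] x, F x < F t := by
  have hslope := (hasDerivWithinAt_iff_tendsto_slope' self_notMem_Ioi).1 hF.Ioi_of_Ici
  filter_upwards [hslope.eventually_const_lt hd, self_mem_nhdsWithin] with t ht hxt
  rw [slope_def_field, lt_div_iff₀ (sub_pos.2 hxt)] at ht
  linarith

lemma HasDerivWithinAt.eventually_lt_of_Iic_pos {F : ℝ → ℝ} {d x : ℝ}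
    (hF : HasDerivWithinAt F d (Iic x) x) (hd : 0 < d) : ∀ᶠ t in 𝓝[<] x, F t < F x := by
  have hslope := (hasDerivWithinAt_iff_tendsto_slope' self_notMem_Iio).1 hF.Iio_of_Iic
  filter_upwards [hslope.eventually_const_lt hd, self_mem_nhdsWithin] with t ht htx
  rw [slope_def_field, lt_div_iff_of_neg (sub_neg.2 htx)] at ht
  linarith

theorem le_of_forall_max_oneSidedDeriv_pos {F α β : ℝ → ℝ} {u v : ℝ} (huv : u ≤ v)
    (hF : ContinuousOn F (Icc u v))
    (hα : ∀ t ∈ Ioo u v, HasDerivWithinAt F (α t) (Ici t) t)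
    (hβ : ∀ t ∈ Ioo u v, HasDerivWithinAt F (β t) (Iic t) t)
    (hpos : ∀ t ∈ Ioo u v, 0 < max (α t) (β t)) : F u ≤ F v := by
  by_contra! hvu
  obtain ⟨c, hcM, hvc, hcu⟩ :
      ∃ c ∈ (F '' {x | ∀ᶠ y in 𝓝[≠] x, F y < F x})ᶜ, F v < c ∧ c < F u :=
    (((countable_setOf_strictLocalMax F).image F).dense_compl ℝ).exists_between hvu
  let S := Icc u v ∩ F ⁻¹' Ici c
  have hSbdd : BddAbove S := bddAbove_Icc.mono inter_subset_left
  obtain ⟨hsuv, hcs⟩ : sSup S ∈ S :=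
    (hF.preimage_isClosed_of_isClosed isClosed_Icc isClosed_Ici).csSup_mem
      ⟨u, left_mem_Icc.2 huv, hcu.le⟩ hSbdd
  set s := sSup S
  have hright : ∀ t ∈ Ioc s v, F t < c := fun t ht => by
    by_contra! h
    exact (le_csSup hSbdd ⟨⟨hsuv.1.trans ht.1.le, ht.2⟩, h⟩).not_gt ht.1
  have hsv : s < v := hsuv.2.lt_of_ne fun h => (hvc.trans_le (h ▸ hcs)).false
  have hFs : F s = c := by
    refine le_antisymm ?_ hcs
    have hcont : Tendsto F (𝓝[>] s) (𝓝 (F s)) := by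
      rw [← nhdsWithin_Ioc_eq_nhdsGT hsv]
      exact ((hF s hsuv).mono (Icc_subset_Icc_left hsuv.1 |>.trans' Ioc_subset_Icc_self)).tendsto
    refine le_of_tendsto hcont ?_
    filter_upwards [Ioc_mem_nhdsGT hsv] with t ht using (hright t ht).le
  have hsI : s ∈ Ioo u v := ⟨hsuv.1.lt_of_ne fun h => hcu.ne' (h ▸ hFs), hsv⟩
  have hβs : 0 < β s := by
    refine (lt_max_iff.1 (hpos s hsI)).resolve_left fun hαs => ?_
    obtain ⟨t, hst, ht⟩ :=
      (((hα s hsI).eventually_lt_of_Ici_pos hαs).and (Ioc_mem_nhdsGT hsv)).exists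
    exact (hright t ht).not_gt (hFs ▸ hst)
  refine hcM ⟨s, ?_, hFs⟩
  rw [mem_ofPred_eq, ← nhdsLT_sup_nhdsGT, eventually_sup]
  refine ⟨(hβ s hsI).eventually_lt_of_Iic_pos hβs, ?_⟩
  filter_upwards [Ioc_mem_nhdsGT hsv] with t ht using hFs ▸ hright t ht

lemma le_slope_of_forall_lt_max_oneSidedDeriv {f α β : ℝ → ℝ} {x y c : ℝ} (hxy : x < y)
    (hf : ContinuousOn f (Icc x y))
    (hα : ∀ t ∈ Ioo x y, HasDerivWithinAt f (α t) (Ici t) t)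
    (hβ : ∀ t ∈ Ioo x y, HasDerivWithinAt f (β t) (Iic t) t)
    (hc : ∀ t ∈ Ioo x y, c < max (α t) (β t)) : c ≤ slope f x y := by
  have hline (s : Set ℝ) (t : ℝ) : HasDerivWithinAt (fun u => c * u) c s t := by
    simpa using (hasDerivWithinAt_id t s).const_mul c
  have key := le_of_forall_max_oneSidedDeriv_pos (F := fun t => f t - c * t)
    (α := fun t => α t - c) (β := fun t => β t - c) hxy.le
    (hf.sub (continuousOn_const.mul continuousOn_id))
    (fun t ht => (hα t ht).sub (hline _ t)) (fun t ht => (hβ t ht).sub (hline _ t))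
    (fun t ht => by simpa [max_sub_sub_right] using hc t ht)
  rw [slope_def_field, le_div_iff₀ (sub_pos.2 hxy)]
  linarith

lemma slope_le_of_forall_min_oneSidedDeriv_lt {f α β : ℝ → ℝ} {x y c : ℝ} (hxy : x < y)
    (hf : ContinuousOn f (Icc x y))
    (hα : ∀ t ∈ Ioo x y, HasDerivWithinAt f (α t) (Ici t) t)
    (hβ : ∀ t ∈ Ioo x y, HasDerivWithinAt f (β t) (Iic t) t)
    (hc : ∀ t ∈ Ioo x y, min (α t) (β t) < c) : slope f x y ≤ c := by
  have key := le_slope_of_forall_lt_max_oneSidedDeriv (f := fun t => -f t) (α := fun t => -α t)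
    (β := fun t => -β t) (c := -c) hxy hf.neg (fun t ht => (hα t ht).neg)
    (fun t ht => (hβ t ht).neg) (fun t ht => by simpa [max_neg_neg] using hc t ht)
  rwa [slope_neg, neg_le_neg_iff] at key

section Specular

variable {f : ℝ → ℝ} {x y : ℝ}

lemma specDeriv_le_slope (hxy : x < y) (hf : ContinuousOn f (Icc x y))
    (hd : ∀ t ∈ Ioo x y, SpecularDifferentiableAt f t)
    (hmono : MonotoneOn (specDeriv f) (Icc x y)) : specDeriv f x ≤ slope f x y := by
  refine le_of_forall_lt_imp_le_of_dense fun c hc => ?_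
  refine le_slope_of_forall_lt_max_oneSidedDeriv hxy hf (fun t ht => (hd t ht).1.hasDerivWithinAt)
    (fun t ht => (hd t ht).2.hasDerivWithinAt) fun t ht => ?_
  calc c < specDeriv f x := hc
    _ ≤ specDeriv f t := hmono (left_mem_Icc.2 hxy.le) (Ioo_subset_Icc_self ht) ht.1.le
    _ ≤ _ := (specDeriv_mem_Icc f t).2

lemma slope_le_specDeriv (hxy : x < y) (hf : ContinuousOn f (Icc x y))
    (hd : ∀ t ∈ Ioo x y, SpecularDifferentiableAt f t)
    (hmono : MonotoneOn (specDeriv f) (Icc x y)) : slope f x y ≤ specDeriv f y := by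
  refine le_of_forall_gt_imp_ge_of_dense fun c hc => ?_
  refine slope_le_of_forall_min_oneSidedDeriv_lt hxy hf (fun t ht => (hd t ht).1.hasDerivWithinAt)
    (fun t ht => (hd t ht).2.hasDerivWithinAt) fun t ht => ?_
  calc _ ≤ specDeriv f t := (specDeriv_mem_Icc f t).1
    _ ≤ specDeriv f y := hmono (Ioo_subset_Icc_self ht) (right_mem_Icc.2 hxy.le) ht.2.le
    _ < c := hc

theorem convexOn_of_monotoneOn_specDeriv {s : Set ℝ} (hs : Convex ℝ s)
    (hd : ∀ x ∈ s, SpecularDifferentiableAt f x) (hmono : MonotoneOn (specDeriv f) s) :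
    ConvexOn ℝ s f := by
  have hf : ContinuousOn f s := fun x hx => (hd x hx).continuousAt.continuousWithinAt
  refine convexOn_of_slope_mono_adjacent hs fun {x y z} hx hz hxy hyz => ?_
  have hxz : Icc x z ⊆ s := hs.ordConnected.out hx hz
  have hxy' : Icc x y ⊆ s := (Icc_subset_Icc_right hyz.le).trans hxz
  have hyz' : Icc y z ⊆ s := (Icc_subset_Icc_left hxy.le).trans hxz
  rw [← slope_def_field, ← slope_def_field]
  calc slope f x y ≤ specDeriv f y := slope_le_specDeriv hxy (hf.mono hxy')
        (fun t ht => hd t (hxy' (Ioo_subset_Icc_self ht))) (hmono.mono hxy')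
    _ ≤ slope f y z := specDeriv_le_slope hyz (hf.mono hyz')
        (fun t ht => hd t (hyz' (Ioo_subset_Icc_self ht))) (hmono.mono hyz')

end Specular

theorem convexOn_iff_specDeriv_monotoneOn_general (f : ℝ → ℝ) (a b : ℝ) :
    ConvexOn ℝ (Ioo a b) f ↔
      (∀ x ∈ Ioo a b, SpecularDifferentiableAt f x) ∧
        MonotoneOn (specDeriv f) (Ioo a b) := by
  refine ⟨fun hfc => ?_, fun ⟨hd, hmono⟩ =>
    convexOn_of_monotoneOn_specDeriv (convex_Ioo a b) hd hmono⟩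
  rw [← interior_Ioo]
  exact ⟨fun x hx => hfc.specularDifferentiableAt_of_mem_interior hx, hfc.monotoneOn_specDeriv⟩

theorem convexOn_iff_specDeriv_monotoneOn (f : ℝ → ℝ) (a b : ℝ)
    (hcont : ContinuousOn f (Ioo a b)) :
    ConvexOn ℝ (Ioo a b) f ↔
      (∀ x ∈ Ioo a b, SpecularDifferentiableAt f x) ∧
        MonotoneOn (specDeriv f) (Ioo a b) :=
  convexOn_iff_specDeriv_monotoneOn_general f a b
end

section
/- Let f : (a, b) → ℝ be continuous. Then f is convex on (a, b) if and only if for all x, y ∈ (a, b), f(x) ≥ f^♮(y)(x − y) + f(y), where f^♮ denotes the specular derivative of f (assumed to exist on (a, b)). -/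
open Set

/-- If `β ≤ α` and `α + β ≠ 0` then `A α β` lies between `β` and `α`. -/
lemma A_bounds {α β : ℝ} (hβα : β ≤ α) (h : α + β ≠ 0) : β ≤ A α β ∧ A α β ≤ α := by
  set s := Real.sqrt ((α ^ 2 + 1) * (β ^ 2 + 1)) with hs
  have hs0 : 0 ≤ s := Real.sqrt_nonneg _
  have hs2 : s ^ 2 = (α ^ 2 + 1) * (β ^ 2 + 1) := Real.sq_sqrt (by positivity)
  rcases lt_or_gt_of_ne h with hneg | hpos
  · have hβ : β < 0 := by linarith
    have hsq : α ^ 2 ≤ β ^ 2 := by nlinarith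
    have h1 : s ≤ β ^ 2 + 1 := by
      calc s ≤ Real.sqrt ((β ^ 2 + 1) ^ 2) := Real.sqrt_le_sqrt (by nlinarith)
        _ = β ^ 2 + 1 := Real.sqrt_sq (by positivity)
    have h2 : α ^ 2 + 1 ≤ s := by
      calc α ^ 2 + 1 = Real.sqrt ((α ^ 2 + 1) ^ 2) := (Real.sqrt_sq (by positivity)).symm
        _ ≤ s := Real.sqrt_le_sqrt (by nlinarith)
    constructor
    · rw [A, le_div_iff_of_neg hneg]; nlinarith
    · rw [A, div_le_iff_of_neg hneg]; nlinarith
  · have hα : 0 < α := by linarith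
    have hsq : β ^ 2 ≤ α ^ 2 := by nlinarith
    have h1 : β ^ 2 + 1 ≤ s := by
      calc β ^ 2 + 1 = Real.sqrt ((β ^ 2 + 1) ^ 2) := (Real.sqrt_sq (by positivity)).symm
        _ ≤ s := Real.sqrt_le_sqrt (by nlinarith)
    have h2 : s ≤ α ^ 2 + 1 := by
      calc s ≤ Real.sqrt ((α ^ 2 + 1) ^ 2) := Real.sqrt_le_sqrt (by nlinarith)
        _ = α ^ 2 + 1 := Real.sqrt_sq (by positivity)
    constructor
    · rw [A, le_div_iff₀ hpos]; nlinarith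
    · rw [A, div_le_iff₀ hpos]; nlinarith

theorem convexOn_iff_specular_subgradient (f : ℝ → ℝ) (a b : ℝ)
    (hcont : ContinuousOn f (Ioo a b))
    (hdiff : ∀ x ∈ Ioo a b, SpecularDifferentiableAt f x) :
    ConvexOn ℝ (Ioo a b) f ↔
      ∀ x ∈ Ioo a b, ∀ y ∈ Ioo a b,
        f x ≥ specDeriv f y * (x - y) + f y := by
  constructor
  · intro hf x hx y hy
    set α := derivWithin f (Ici y) y with hα
    set β := derivWithin f (Iic y) y with hβ
    have htα : Filter.Tendsto (slope f y) (nhdsWithin y (Ioi y)) (nhds α) := by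
      have := (hdiff y hy).1.hasDerivWithinAt
      rw [hasDerivWithinAt_iff_tendsto_slope] at this
      rwa [Ici_sdiff_left] at this
    have htβ : Filter.Tendsto (slope f y) (nhdsWithin y (Iio y)) (nhds β) := by
      have := (hdiff y hy).2.hasDerivWithinAt
      rw [hasDerivWithinAt_iff_tendsto_slope] at this
      rwa [Iic_diff_right] at this
    have hmono : ∀ u ∈ Ioo a b, ∀ v ∈ Ioo a b, u ≠ y → v ≠ y → u ≤ v →
        slope f y u ≤ slope f y v := by
      intro u hu v hv hu' hv' huv
      rw [slope_def_field, slope_def_field]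
      exact hf.secant_mono hy hu hv hu' hv' huv
    -- α ≤ slope f y x for x > y
    have hαle : ∀ z ∈ Ioo a b, y < z → α ≤ slope f y z := by
      intro z hz hyz
      refine le_of_tendsto htα ?_
      filter_upwards [Ioo_mem_nhdsGT_of_mem (⟨le_refl y, hyz⟩ : y ∈ Ico y z)] with t ht
      exact hmono t ⟨lt_trans hy.1 ht.1, lt_trans ht.2 hz.2⟩ z hz (ne_of_gt ht.1) (ne_of_gt hyz)
        ht.2.le
    -- slope f y x ≤ β for x < y
    have hβge : ∀ z ∈ Ioo a b, z < y → slope f y z ≤ β := by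
      intro z hz hzy
      refine ge_of_tendsto htβ ?_
      filter_upwards [Ioo_mem_nhdsLT_of_mem (⟨hzy, le_refl y⟩ : y ∈ Ioc z y)] with t ht
      exact hmono z hz t ⟨lt_trans hz.1 ht.1, lt_trans ht.2 hy.2⟩ (ne_of_lt hzy) (ne_of_lt ht.2)
        ht.1.le
    -- β ≤ slope f y z for z > y
    have hβs : ∀ z ∈ Ioo a b, y < z → β ≤ slope f y z := by
      intro z hz hyz
      refine le_of_tendsto htβ ?_
      have hay : (a + y) / 2 < y := by linarith [hy.1]
      filter_upwards [Ioo_mem_nhdsLT_of_mem (⟨hay, le_refl y⟩ : y ∈ Ioc ((a + y) / 2) y)]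
        with t ht
      have hta : a < t := by have := ht.1; linarith [hy.1]
      exact hmono t ⟨hta, lt_trans ht.2 hy.2⟩ z hz (ne_of_lt ht.2) (ne_of_gt hyz)
        (le_of_lt (lt_trans ht.2 hyz))
    have hβα : β ≤ α := by
      refine ge_of_tendsto htα ?_
      have hyb : y < (y + b) / 2 := by linarith [hy.2]
      filter_upwards [Ioo_mem_nhdsGT_of_mem (⟨le_refl y, hyb⟩ : y ∈ Ico y ((y + b) / 2))]
        with t ht
      have htb : t < b := by have := ht.2; linarith [hy.2]
      exact hβs t ⟨lt_trans hy.1 ht.1, htb⟩ ht.1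
    have hspec : β ≤ specDeriv f y ∧ specDeriv f y ≤ α := by
      rw [specDeriv]
      simp only [← hα, ← hβ]
      split_ifs with h0
      · constructor <;> linarith
      · exact A_bounds hβα h0
    set σ := specDeriv f y with hσ
    rcases lt_trichotomy x y with hxy | hxy | hxy
    · have h1 := hβge x hx hxy
      rw [slope_def_field, div_le_iff_of_neg (by linarith : x - y < 0)] at h1
      have : σ * (x - y) ≤ β * (x - y) := by nlinarith [hspec.1]
      linarith
    · subst hxy; simp
    · have h1 := hαle x hx hxy
      rw [slope_def_field, le_div_iff₀ (by linarith : (0:ℝ) < x - y)] at h1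
      have : σ * (x - y) ≤ α * (x - y) := by nlinarith [hspec.2]
      linarith
  · intro h
    refine ⟨convex_Ioo a b, ?_⟩
    intro x hx y hy p q hp hq hpq
    have hz : p • x + q • y ∈ Ioo a b := (convex_Ioo a b) hx hy hp hq hpq
    set z := p • x + q • y with hzdef
    have h1 := h x hx z hz
    have h2 := h y hy z hz
    have e : p * (x - z) + q * (y - z) = 0 := by
      simp only [hzdef, smul_eq_mul]
      linear_combination (-(p * x) - q * y) * hpq
    have e1 : p * (specDeriv f z * (x - z) + f z) ≤ p * f x :=
      mul_le_mul_of_nonneg_left h1 hp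
    have e2 : q * (specDeriv f z * (y - z) + f z) ≤ q * f y :=
      mul_le_mul_of_nonneg_left h2 hq
    have e3 : specDeriv f z * (p * (x - z) + q * (y - z)) = 0 := by rw [e, mul_zero]
    have e4 : (p + q) * f z = f z := by rw [hpq, one_mul]
    have key : f z ≤ p * f x + q * f y := by nlinarith [e1, e2, e3, e4]
    simpa [smul_eq_mul] using key
end

section
/- Let f : (a, b) → ℝ be a convex function that is specularly differentiable on (a, b). If f^♮(x*) = 0 for some x* ∈ (a, b), then x* is a global minimizer of f on (a, b). -/
open Set

theorem isMinOn_of_specDeriv_zero (f : ℝ → ℝ) (a b : ℝ)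
    (hf : ConvexOn ℝ (Ioo a b) f)
    (hdiff : ∀ x ∈ Ioo a b, SpecularDifferentiableAt f x)
    (xs : ℝ) (hxs : xs ∈ Ioo a b) (hzero : specDeriv f xs = 0) :
    ∀ x ∈ Ioo a b, f xs ≤ f x := by
  obtain ⟨hdr, hdl⟩ := hdiff xs hxs
  set α := derivWithin f (Ici xs) xs with hα
  set β := derivWithin f (Iic xs) xs with hβ
  -- specDeriv = 0 forces α + β = 0
  have hsum : α + β = 0 := by
    by_contra hne
    have hz : A α β = 0 := by
      simpa [specDeriv, ← hα, ← hβ, hne] using hzero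
    have hnum : α * β - 1 + Real.sqrt ((α ^ 2 + 1) * (β ^ 2 + 1)) = 0 :=
      by
        have := (div_eq_zero_iff.mp hz)
        tauto
    have hsq : Real.sqrt ((α ^ 2 + 1) * (β ^ 2 + 1)) ^ 2 = (α ^ 2 + 1) * (β ^ 2 + 1) :=
      Real.sq_sqrt (by positivity)
    have : Real.sqrt ((α ^ 2 + 1) * (β ^ 2 + 1)) = 1 - α * β := by linarith
    rw [this] at hsq
    have : (α + β) ^ 2 = 0 := by nlinarith
    exact hne (pow_eq_zero_iff (n := 2) (by norm_num) |>.mp this)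
  -- slope tendsto facts
  have hαt : Filter.Tendsto (slope f xs) (nhdsWithin xs (Ioi xs)) (nhds α) := by
    have := hasDerivWithinAt_iff_tendsto_slope.mp hdr.hasDerivWithinAt
    simpa [Ici_sdiff_left] using this
  have hβt : Filter.Tendsto (slope f xs) (nhdsWithin xs (Iio xs)) (nhds β) := by
    have := hasDerivWithinAt_iff_tendsto_slope.mp hdl.hasDerivWithinAt
    simpa [Iic_diff_right] using this
  obtain ⟨ha, hb⟩ := hxs
  -- α ≤ slope xs x for x > xs
  have right_slope : ∀ x ∈ Ioo a b, xs < x → α ≤ (f x - f xs) / (x - xs) := by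
    intro x hx hlt
    refine le_of_tendsto hαt ?_
    filter_upwards [Ioo_mem_nhdsGT_of_mem ⟨le_refl xs, hlt⟩] with y hy
    have hy1 : xs < y := hy.1
    have hy2 : y < x := hy.2
    have := hf.slope_mono_adjacent (x := xs) (y := y) (z := x)
      ⟨ha, hb⟩ hx hy1 hy2
    have h2 := hf.slope_mono_adjacent (x := xs) (y := y) (z := x) ⟨ha, hb⟩ hx hy1 hy2
    -- slope f xs y = (f y - f xs)/(y - xs)
    rw [slope_def_field]
    -- need (f y - f xs)/(y - xs) ≤ (f x - f xs)/(x - xs)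
    have h3 : (f y - f xs) / (y - xs) ≤ (f x - f xs) / (x - xs) := by
      rw [div_le_div_iff₀ (by linarith) (by linarith)] at *
      nlinarith [h2, sub_pos.mpr hy1, sub_pos.mpr hy2]
    simpa [div_eq_inv_mul] using h3
  -- slope x xs ≤ β for x < xs
  have left_slope : ∀ x ∈ Ioo a b, x < xs → (f x - f xs) / (x - xs) ≤ β := by
    intro x hx hlt
    refine ge_of_tendsto hβt ?_
    filter_upwards [Ioo_mem_nhdsLT_of_mem ⟨hlt, le_refl xs⟩] with y hy
    have hy1 : x < y := hy.1
    have hy2 : y < xs := hy.2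
    have h2 := hf.slope_mono_adjacent (x := x) (y := y) (z := xs) hx ⟨ha, hb⟩ hy1 hy2
    rw [slope_def_field]
    have h3 : (f x - f xs) / (x - xs) ≤ (f y - f xs) / (y - xs) := by
      have e1 : (f x - f xs) / (x - xs) = (f xs - f x) / (xs - x) := by
        rw [div_eq_div_iff (by linarith) (by linarith)]; ring
      have e2 : (f y - f xs) / (y - xs) = (f xs - f y) / (xs - y) := by
        rw [div_eq_div_iff (by linarith) (by linarith)]; ring
      rw [e1, e2, div_le_div_iff₀ (by linarith) (by linarith)]
      rw [div_le_div_iff₀ (by linarith) (by linarith)] at h2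
      nlinarith
    simpa [div_eq_inv_mul] using h3
  -- β ≤ α
  have hβα : β ≤ α := by
    obtain ⟨c, hc1, hc2⟩ := exists_between hb
    have hc : c ∈ Ioo a b := ⟨lt_trans ha hc1, hc2⟩
    refine ge_of_tendsto hαt ?_
    filter_upwards [Ioo_mem_nhdsGT_of_mem ⟨le_refl xs, hc1⟩] with y hy
    rw [slope_def_field]
    have hy1 : xs < y := hy.1
    -- β ≤ slope xs y : take limit from left of slope u xs ≤ slope xs y
    refine le_of_tendsto hβt ?_
    filter_upwards [Ioo_mem_nhdsLT_of_mem ⟨ha, le_refl xs⟩] with u hu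
    rw [slope_def_field]
    have h2 := hf.slope_mono_adjacent (x := u) (y := xs) (z := y)
      ⟨hu.1, lt_trans hu.2 hb⟩ ⟨lt_trans ha hy1, lt_trans hy.2 hc2⟩ hu.2 hy1
    have : (f u - f xs) / (u - xs) = (f xs - f u) / (xs - u) := by
      rw [div_eq_div_iff (by linarith [hu.2]) (by linarith [hu.2])]; ring
    rw [this]; exact h2
  have hαpos : 0 ≤ α := by linarith
  have hβneg : β ≤ 0 := by linarith
  intro x hx
  rcases lt_trichotomy x xs with h | h | h
  · have := left_slope x hx h
    have hxxs : x - xs < 0 := by linarith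
    nlinarith [div_le_iff_of_neg hxxs |>.mp (le_trans this hβneg)]
  · rw [h]
  · have := right_slope x hx h
    have hxxs : 0 < x - xs := by linarith
    nlinarith [le_div_iff₀ hxxs |>.mp (le_trans hαpos this)]
end
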